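/- Every fighting fish F satisfies exactly one of the following, and in each case the data (F1, F2, i) are uniquely determined: (Case I) F = ENWS; (Case II) F = ✠_i(F1) for some fighting fish F1 and some 1 ≤ i ≤ jaw(F1); (Case III) F = ENWS ⊙ F2 for some fighting fish F2; (Case IV) F = ✠_i(F1) ⊙ F2 for some fighting fish F1, F2 and some 1 ≤ i ≤ jaw(F1). -/

import Mathlib

/-- The four-letter alphabet of steps. -/
inductive Letter : Type
  | E | N | W | S
deriving DecidableEq, Repr

open Letter

/-- Fighting fish: words obtainable from `ENWS` by upper, lower and double gluings. -/
inductive IsFF : List Letter → Prop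
  | base : IsFF [E, N, W, S]
  | upper (u v : List Letter) :
      IsFF (u ++ [W] ++ v) → IsFF (u ++ [N, W, S] ++ v)
  | lower (u v : List Letter) :
      IsFF (u ++ [N] ++ v) → IsFF (u ++ [E, N, W] ++ v)
  | double (u v : List Letter) :
      IsFF (u ++ [W, N] ++ v) → IsFF (u ++ [N, W] ++ v)

/-- Generalized fighting fish: words obtainable from the empty word by the
operations `∇_k` (replace `N^k` by `E N^k W`) and `△_k` (replace `W^k` by `N W^k S`),
for `k ≥ 0`. -/
inductive IsGFF : List Letter → Prop
  | base : IsGFF []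
  | nabla (u v : List Letter) (k : ℕ) :
      IsGFF (u ++ List.replicate k N ++ v) →
      IsGFF (u ++ [E] ++ List.replicate k N ++ [W] ++ v)
  | delta (u v : List Letter) (k : ℕ) :
      IsGFF (u ++ List.replicate k W ++ v) →
      IsGFF (u ++ [N] ++ List.replicate k W ++ [S] ++ v)

/-- The latitude of a word: number of `N`'s minus number of `S`'s. -/
def lat (w : List Letter) : ℤ := (w.count N : ℤ) - (w.count S : ℤ)

/-- The longitude of a word: number of `E`'s minus number of `W`'s. -/
def long (w : List Letter) : ℤ := (w.count E : ℤ) - (w.count W : ℤ)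

/-- The size of a word: half its length. -/
def size (w : List Letter) : ℕ := w.length / 2

/-- The jaw of a word: the length of the maximal initial run of `E`'s. -/
def jaw (w : List Letter) : ℕ := (w.takeWhile (· == Letter.E)).length

/-- The `i`-augmentation of a fighting fish `F = E^{jaw F} · G`:
`✠_i(F) = E^i · N · E^{jaw F − i} · G · S`. -/
def ffAug (w : List Letter) (i : ℕ) : List Letter :=
  List.replicate i Letter.E ++ [Letter.N] ++ List.replicate (jaw w - i) Letter.E ++
    w.drop (jaw w) ++ [Letter.S]

/-- The concatenation of fighting fish `F1 = E^{jaw F1} · N · R` and `F2 = G · S`: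
`F1 ⊙ F2 = E^{jaw F1} · G · R`. -/
def ffConc (w1 w2 : List Letter) : List Letter :=
  List.replicate (jaw w1) Letter.E ++ w2.dropLast ++ w1.drop (jaw w1 + 1)

/-- Case I of the decomposition: `F` is the head `ENWS`. -/
def CaseI (F : List Letter) : Prop := F = [Letter.E, Letter.N, Letter.W, Letter.S]

/-- Case II: `F = ✠_i(F1)` for a unique fighting fish `F1` and unique
`1 ≤ i ≤ jaw F1`. -/
def CaseII (F : List Letter) : Prop :=
  ∃! q : List Letter × ℕ,
    IsFF q.1 ∧ 1 ≤ q.2 ∧ q.2 ≤ jaw q.1 ∧ F = ffAug q.1 q.2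

/-- Case III: `F = ENWS ⊙ F2` for a unique fighting fish `F2`. -/
def CaseIII (F : List Letter) : Prop :=
  ∃! F2 : List Letter,
    IsFF F2 ∧ F = ffConc [Letter.E, Letter.N, Letter.W, Letter.S] F2

/-- Case IV: `F = ✠_i(F1) ⊙ F2` for unique fighting fish `F1`, `F2` and unique
`1 ≤ i ≤ jaw F1`. -/
def CaseIV (F : List Letter) : Prop :=
  ∃! q : (List Letter × List Letter) × ℕ,
    IsFF q.1.1 ∧ IsFF q.1.2 ∧ 1 ≤ q.2 ∧ q.2 ≤ jaw q.1.1 ∧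
      F = ffConc (ffAug q.1.1 q.2) q.1.2


/-!
Every fighting fish has the form `E^j N T S` with `j ≥ 1`. A gluing applied to a head
(`ENWS` or `✠_i(F1)`) or to a concatenation `H ⊙ F2` acts inside `F1`, inside `F2`, inside the
tail of `H`, or at the first `N` (a lower gluing there yields `H ⊙ ENWS`, or raises the jaw of
`F1`), so the decomposition is carried along the derivation. The one exception is a double
gluing of the factor `WN` made of the last `W` of `F2` and the middle `N` of `✠_j(F1)` with
`j = jaw F1`: then `F2` ends in `WS`, so by induction on length it is `ENWS` or `ENWS ⊙ B`, and
the result is `✠_{j+1}(F1')` or `✠_{j+1}(F1') ⊙ B`, where `F1'` is `F1` lower-glued at its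
first `N`.

Cases I and III end in `WS`, cases II and IV in `SS`. The remaining ambiguities are settled
by latitude: after its initial run of `E`s a fish stays strictly above latitude `0` until its
last letter, and its penultimate letter is `W` or `S`, so the part of `✠_i(F1) ⊙ F2` coming
from `F2` is determined.
-/

open List (replicate)

@[simp] lemma lat_nil : lat [] = 0 := rfl

@[simp] lemma lat_append (u v : List Letter) : lat (u ++ v) = lat u + lat v := by
  simp only [lat, List.count_append]; push_cast; ring

@[simp] lemma lat_cons_E (w : List Letter) : lat (E :: w) = lat w := by simp [lat]

@[simp] lemma lat_cons_N (w : List Letter) : lat (N :: w) = lat w + 1 := by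
  simp [lat]; ring

@[simp] lemma lat_cons_W (w : List Letter) : lat (W :: w) = lat w := by simp [lat]

@[simp] lemma lat_cons_S (w : List Letter) : lat (S :: w) = lat w - 1 := by
  simp [lat]; ring

@[simp] lemma lat_replicate_E (n : ℕ) : lat (replicate n E) = 0 := by
  simp [lat, List.count_replicate]

@[simp] lemma long_nil : long [] = 0 := rfl

@[simp] lemma long_append (u v : List Letter) : long (u ++ v) = long u + long v := by
  simp only [long, List.count_append]; push_cast; ring

@[simp] lemma long_cons_E (w : List Letter) : long (E :: w) = long w + 1 := by
  simp [long]; ring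

@[simp] lemma long_cons_N (w : List Letter) : long (N :: w) = long w := by simp [long]

@[simp] lemma long_cons_W (w : List Letter) : long (W :: w) = long w - 1 := by
  simp [long]; ring

@[simp] lemma long_cons_S (w : List Letter) : long (S :: w) = long w := by simp [long]

@[simp] lemma long_replicate_E (n : ℕ) : long (replicate n E) = n := by
  simp [long, List.count_replicate]

lemma replicate_append_N_inj {a b : ℕ} {X Y : List Letter}
    (h : replicate a E ++ N :: X = replicate b E ++ N :: Y) : a = b ∧ X = Y := by
  induction a generalizing b with
  | zero => cases b <;> simp_all [List.replicate_succ]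
  | succ a ih =>
    cases b with
    | zero => simp [List.replicate_succ] at h
    | succ b =>
      simp only [List.replicate_succ, List.cons_append, List.cons.injEq, true_and] at h
      exact (ih h).imp (congrArg (· + 1)) id

lemma jaw_replicate_append_N (j : ℕ) (T : List Letter) : jaw (replicate j E ++ N :: T) = j := by
  induction j with
  | zero => rfl
  | succ j ih => simp_all [jaw, List.replicate_succ]

lemma ffAug_eq (j i : ℕ) (T : List Letter) :
    ffAug (replicate j E ++ N :: T) i =
      replicate i E ++ N :: (replicate (j - i) E ++ N :: (T ++ [S])) := by
  simp [ffAug, jaw_replicate_append_N, List.drop_left']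

lemma ffConc_eq (j : ℕ) (R F2 : List Letter) :
    ffConc (replicate j E ++ N :: R) F2 = replicate j E ++ F2.dropLast ++ R := by
  simp [ffConc, jaw_replicate_append_N, List.drop_append]

lemma suffix_pair_eq {a b c d : Letter} {w : List Letter} (h : [a, b] <:+ w)
    (h' : [c, d] <:+ w) : a = c ∧ b = d := by
  simpa using (List.suffix_of_suffix_length_le h h' (by simp)).eq_of_length (by simp)

inductive Gluing : List Letter → List Letter → Prop
  | upper : Gluing [W] [N, W, S]
  | lower : Gluing [N] [E, N, W]
  | double : Gluing [W, N] [N, W]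

namespace Gluing

variable {p q u v : List Letter}

lemma ne_nil (hg : Gluing p q) : p ≠ [] := by cases hg <;> simp

lemma E_not_mem (hg : Gluing p q) : E ∉ p := by cases hg <;> simp

lemma S_not_mem (hg : Gluing p q) : S ∉ p := by cases hg <;> simp

lemma lat_eq (hg : Gluing p q) : lat q = lat p := by cases hg <;> simp

lemma long_eq (hg : Gluing p q) : long q = long p := by cases hg <;> simp

lemma length_le (hg : Gluing p q) : p.length ≤ q.length := by cases hg <;> simp

lemma eq_replicate_append {j : ℕ} {Y : List Letter} (hg : Gluing p q)
    (h : u ++ p ++ v = replicate j E ++ Y) :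
    ∃ u', u = replicate j E ++ u' ∧ Y = u' ++ p ++ v := by
  rw [List.append_assoc, List.append_eq_append_iff] at h
  rcases h with ⟨a, hj, hY⟩ | ⟨c, hu, hY⟩
  · rcases a with _ | ⟨x, a⟩
    · exact ⟨[], by simpa using hj.symm, by simpa using hY.symm⟩
    · have hx : x = E := List.eq_of_mem_replicate (a := E) (n := j) (by rw [hj]; simp)
      obtain ⟨y, p', rfl⟩ := List.exists_cons_of_ne_nil hg.ne_nil
      obtain rfl : y = x := by simpa using congrArg List.head? hY
      exact absurd (by simp [hx]) hg.E_not_mem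
  · exact ⟨c, hu, by simp [hY]⟩

lemma eq_N_cons {Y : List Letter} (hg : Gluing p q) (h : u ++ p ++ v = N :: Y) :
    (u = [] ∧ p = [N] ∧ q = [E, N, W] ∧ v = Y) ∨ ∃ u', u = N :: u' ∧ Y = u' ++ p ++ v := by
  rcases u with _ | ⟨x, u'⟩
  · cases hg <;> simp_all
  · simp only [List.cons_append, List.cons.injEq] at h
    exact Or.inr ⟨u', by rw [h.1], h.2.symm⟩

lemma eq_append {X Y : List Letter} (hg : Gluing p q) (h : u ++ p ++ v = X ++ Y) :
    (∃ t, X = u ++ p ++ t ∧ v = t ++ Y) ∨ (∃ t, u = X ++ t ∧ Y = t ++ p ++ v) ∨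
      (p = [W, N] ∧ q = [N, W] ∧ X = u ++ [W] ∧ Y = N :: v) := by
  rw [List.append_assoc, List.append_eq_append_iff] at h
  rcases h with ⟨a, hX, h⟩ | ⟨c, hu, hY⟩
  · rcases List.append_eq_append_iff.1 h with ⟨b, ha, hv⟩ | ⟨c, hp, hY⟩
    · exact Or.inl ⟨b, by simp [hX, ha], hv⟩
    · rcases a with _ | ⟨x, a⟩
      · exact Or.inr (Or.inl ⟨[], by simpa using hX.symm, by simp [hY, hp]⟩)
      rcases c with _ | ⟨y, c⟩
      · exact Or.inl ⟨[], by simp [hX, hp], by simpa using hY.symm⟩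
      cases hg <;> rcases a with _ | ⟨z, a⟩ <;> simp_all
  · exact Or.inr (Or.inl ⟨c, hu, by simp [hY]⟩)

lemma eq_append_S {X : List Letter} (hg : Gluing p q) (h : u ++ p ++ v = X ++ [S]) :
    ∃ t, X = u ++ p ++ t ∧ v = t ++ [S] := by
  rcases hg.eq_append h with h | ⟨t, -, hS⟩ | ⟨-, -, -, hS⟩
  · exact h
  · obtain ⟨x, p', rfl⟩ := List.exists_cons_of_ne_nil hg.ne_nil
    have hx : x ∈ [S] := by rw [hS]; simp
    exact absurd (by simp [List.mem_singleton.1 hx]) hg.S_not_mem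
  · simp at hS

lemma eq_E_or_lat_pos_of_prefix {c a : List Letter} (hg : Gluing p q)
    (h : q = c ++ a) (hc : c ≠ []) (ha : a ≠ []) : c = [E] ∨ 0 < lat c := by
  cases hg <;> rcases c with _ | ⟨x, _ | ⟨y, _ | ⟨z, c⟩⟩⟩ <;> simp at h <;> aesop

end Gluing

theorem IsFF.glue {u v p q : List Letter} (hg : Gluing p q) (h : IsFF (u ++ p ++ v)) :
    IsFF (u ++ q ++ v) := by
  cases hg
  · exact .upper u v h
  · exact .lower u v h
  · exact .double u v h

theorem IsFF.gluing_induction {motive : (F : List Letter) → IsFF F → Prop}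
    (base : motive _ .base)
    (glue : ∀ u v p q (hg : Gluing p q) (h : IsFF (u ++ p ++ v)), motive _ h →
      motive _ (h.glue hg))
    {F : List Letter} (hF : IsFF F) : motive F hF := by
  induction hF with
  | base => exact base
  | upper u v h ih => exact glue u v _ _ .upper h ih
  | lower u v h ih => exact glue u v _ _ .lower h ih
  | double u v h ih => exact glue u v _ _ .double h ih

namespace IsFF

variable {F : List Letter}

lemma lat_eq_zero (hF : IsFF F) : lat F = 0 := by
  induction hF using IsFF.gluing_induction with
  | base => rfl
  | glue u v p q hg _ ih => simpa [hg.lat_eq] using ih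

lemma long_eq_zero (hF : IsFF F) : long F = 0 := by
  induction hF using IsFF.gluing_induction with
  | base => rfl
  | glue u v p q hg _ ih => simpa [hg.long_eq] using ih

lemma exists_eq (hF : IsFF F) : ∃ j T, 0 < j ∧ F = replicate j E ++ N :: (T ++ [S]) := by
  induction hF using IsFF.gluing_induction with
  | base => exact ⟨1, [W], one_pos, rfl⟩
  | glue u v p q hg _ ih =>
    obtain ⟨j, T, hj, hP⟩ := ih
    obtain ⟨u', rfl, hT⟩ := hg.eq_replicate_append hP
    rcases hg.eq_N_cons hT.symm with ⟨rfl, rfl, rfl, rfl⟩ | ⟨u'', rfl, hT'⟩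
    · exact ⟨j + 1, W :: T, j.succ_pos, by simp [List.replicate_succ']⟩
    · obtain ⟨t, rfl, rfl⟩ := hg.eq_append_S hT'.symm
      exact ⟨j, u'' ++ q ++ t, hj, by simp⟩

lemma exists_eq_append_S (hF : IsFF F) : ∃ D, F = D ++ [S] := by
  obtain ⟨j, T, -, rfl⟩ := hF.exists_eq
  exact ⟨replicate j E ++ N :: T, by simp⟩

lemma lower_at_jaw {j : ℕ} {T : List Letter} (hF : IsFF (replicate j E ++ N :: T)) :
    IsFF (replicate (j + 1) E ++ N :: W :: T) := by
  simpa [List.replicate_succ'] using IsFF.lower (replicate j E) T (by simpa using hF)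

lemma suffix_W_S_or_S_S (hF : IsFF F) : [W, S] <:+ F ∨ [S, S] <:+ F := by
  induction hF using IsFF.gluing_induction with
  | base => exact Or.inl (List.suffix_append [E, N] _)
  | glue u v p q hg hP ih =>
    obtain ⟨j, T, -, h⟩ := hP.exists_eq
    obtain ⟨t, -, rfl⟩ := hg.eq_append_S (X := replicate j E ++ N :: T) (by simpa using h)
    rcases List.eq_nil_or_concat' t with rfl | ⟨t', x, rfl⟩
    · cases hg
      · exact Or.inr ⟨u ++ [N, W], by simp⟩
      · exact Or.inl ⟨u ++ [E, N], by simp⟩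
      · exact Or.inl ⟨u ++ [N], by simp⟩
    · have hx : [x, S] <:+ u ++ p ++ (t' ++ [x] ++ [S]) := ⟨u ++ p ++ t', by simp⟩
      have hx' : [x, S] <:+ u ++ q ++ (t' ++ [x] ++ [S]) := ⟨u ++ q ++ t', by simp⟩
      rcases ih with ih | ih
      · obtain rfl := (suffix_pair_eq hx ih).1; exact Or.inl hx'
      · obtain rfl := (suffix_pair_eq hx ih).1; exact Or.inr hx'

lemma eq_replicate_or_lat_pos {p r : List Letter} (hF : IsFF F) (h : p ++ r = F)
    (hr : r ≠ []) : (∃ k, p = replicate k E) ∨ 0 < lat p := by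
  induction hF using IsFF.gluing_induction generalizing p r with
  | base =>
    rcases p with _ | ⟨a, _ | ⟨b, _ | ⟨c, _ | ⟨d, p⟩⟩⟩⟩ <;> simp at h <;> simp_all
    exact ⟨1, rfl⟩
  | glue u v p' q hg _ ih =>
    have hu : (∃ k, u = replicate k E) ∨ 0 < lat u :=
      ih (r := p' ++ v) (by simp) (by simp [hg.ne_nil])
    have beyond : ∀ s, v = s ++ r → 0 < lat (u ++ q ++ s) := by
      rintro s rfl
      rcases ih (p := u ++ p' ++ s) (by simp) hr with ⟨k, hk⟩ | hpos
      · obtain ⟨x, hx⟩ := List.exists_mem_of_ne_nil _ hg.ne_nil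
        have hxE : x = E := List.eq_of_mem_replicate (hk ▸ (by simp [hx] : x ∈ u ++ p' ++ s))
        exact absurd (hxE ▸ hx) hg.E_not_mem
      · simpa [hg.lat_eq] using hpos
    rw [List.append_assoc, List.append_eq_append_iff] at h
    rcases h with ⟨a, rfl, rfl⟩ | ⟨c, rfl, h⟩
    · exact ih (r := a ++ p' ++ v) (by simp) (by simp [hg.ne_nil])
    rcases List.append_eq_append_iff.1 h with ⟨s, rfl, rfl⟩ | ⟨c', hq, rfl⟩
    · exact Or.inr (by simpa using beyond s rfl)
    rcases eq_or_ne c [] with rfl | hc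
    · simpa using hu
    rcases eq_or_ne c' [] with rfl | hc'
    · exact Or.inr (by simpa [hq] using beyond [] rfl)
    rcases hg.eq_E_or_lat_pos_of_prefix hq hc hc' with rfl | hpos
    · rcases hu with ⟨k, rfl⟩ | hu
      · exact Or.inl ⟨k + 1, by simp [List.replicate_succ']⟩
      · exact Or.inr (by simpa using hu)
    · have hu0 : 0 ≤ lat u := by
        rcases hu with ⟨k, rfl⟩ | hu
        · simp
        · exact hu.le
      exact Or.inr (by simp; linarith)

lemma replicate_inj {j j' : ℕ} {T : List Letter} (hF : IsFF (replicate j E ++ N :: T))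
    (hF' : IsFF (replicate j' E ++ N :: T)) : j = j' := by
  have h := hF.long_eq_zero
  have h' := hF'.long_eq_zero
  simp at h h'
  omega

lemma middle_ne_nil {k : ℕ} {H : List Letter} (hF : IsFF (replicate k E ++ N :: (H ++ [S]))) :
    H ≠ [] := by
  rintro rfl
  have hNS : [N, S] <:+ replicate k E ++ N :: ([] ++ [S]) := ⟨replicate k E, by simp⟩
  rcases hF.suffix_W_S_or_S_S with h | h <;> simpa using suffix_pair_eq hNS h

lemma not_E_suffix_middle {k : ℕ} {H : List Letter}
    (hF : IsFF (replicate k E ++ N :: (H ++ [S]))) : ¬ [E] <:+ H := by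
  rintro ⟨H₀, rfl⟩
  have hES : [E, S] <:+ replicate k E ++ N :: (H₀ ++ [E] ++ [S]) :=
    ⟨replicate k E ++ N :: H₀, by simp⟩
  rcases hF.suffix_W_S_or_S_S with h | h <;> simpa using suffix_pair_eq hES h

lemma eq_replicate_of_lat_eq_zero {j e : ℕ} {T t X : List Letter}
    (hF : IsFF (replicate j E ++ N :: T)) (h : replicate e E ++ N :: (T ++ [S]) = t ++ X)
    (hX : 2 ≤ X.length) (ht : lat t = 0) : ∃ m, t = replicate m E := by
  rcases List.append_eq_append_iff.1 h with ⟨s, rfl, hs⟩ | ⟨s, he, -⟩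
  · rcases s with _ | ⟨x, s⟩
    · exact ⟨e, by simp⟩
    obtain ⟨rfl, hT⟩ : N = x ∧ T ++ [S] = s ++ X := by simpa using hs
    obtain ⟨w, rfl, hw⟩ : ∃ w, T = s ++ w ∧ w ≠ [] := by
      rcases List.append_eq_append_iff.1 hT with ⟨a, rfl, ha⟩ | ⟨w, rfl, rfl⟩
      · have := congrArg List.length ha
        simp at this
        omega
      · exact ⟨w, rfl, by rintro rfl; simp at hX⟩
    rcases hF.eq_replicate_or_lat_pos (p := replicate j E ++ N :: s) (by simp) hw with
      ⟨k, hk⟩ | hpos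
    · have : N ∈ replicate k E := hk ▸ (by simp)
      simp at this
    · simp at ht hpos
      omega
  · exact ⟨t.length, (List.append_eq_replicate_iff.1 he.symm).2.1⟩

/-- `H ++ t` is the middle of a fish and `t ++ X` the tail of an augmented fish. -/
lemma eq_nil_of_append_middle {j e k : ℕ} {T H t X : List Letter}
    (hF1 : IsFF (replicate j E ++ N :: T)) (hF2 : IsFF (replicate k E ++ N :: (H ++ t ++ [S])))
    (h : replicate e E ++ N :: (T ++ [S]) = t ++ X) (hX : 2 ≤ X.length) (ht : lat t = 0) :
    t = [] := by
  obtain ⟨_ | m, rfl⟩ := hF1.eq_replicate_of_lat_eq_zero h hX ht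
  · rfl
  · exact absurd ⟨H ++ replicate m E, by simp [List.replicate_succ']⟩ hF2.not_E_suffix_middle

end IsFF

lemma ffConc_ENWS_eq (F2 : List Letter) :
    ffConc [E, N, W, S] F2 = E :: (F2.dropLast ++ [W, S]) := by
  simpa using ffConc_eq 1 [W, S] F2

lemma ffConc_ffAug_eq (i j k : ℕ) (T H : List Letter) :
    ffConc (ffAug (replicate j E ++ N :: T) i) (replicate k E ++ N :: (H ++ [S])) =
      replicate (i + k) E ++ N :: (H ++ (replicate (j - i) E ++ N :: (T ++ [S]))) := by
  rw [ffAug_eq, ffConc_eq]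
  simp [List.dropLast_cons_of_ne_nil, List.replicate_add, -List.replicate_append_replicate]

lemma ffAug_inj {F1 F1' : List Letter} {i i' : ℕ} (hF1 : IsFF F1) (hF1' : IsFF F1')
    (hi : i ≤ jaw F1) (hi' : i' ≤ jaw F1') (h : ffAug F1 i = ffAug F1' i') :
    F1 = F1' ∧ i = i' := by
  obtain ⟨j, T, -, rfl⟩ := hF1.exists_eq
  obtain ⟨j', T', -, rfl⟩ := hF1'.exists_eq
  rw [jaw_replicate_append_N] at hi hi'
  rw [ffAug_eq, ffAug_eq] at h
  obtain ⟨rfl, h⟩ := replicate_append_N_inj h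
  obtain ⟨hj, h⟩ := replicate_append_N_inj h
  obtain rfl : T = T' := by simpa using h
  obtain rfl : j = j' := by omega
  exact ⟨rfl, rfl⟩

lemma ffConc_ENWS_inj {F2 F2' : List Letter} (hF2 : IsFF F2) (hF2' : IsFF F2')
    (h : ffConc [E, N, W, S] F2 = ffConc [E, N, W, S] F2') : F2 = F2' := by
  obtain ⟨D, rfl⟩ := hF2.exists_eq_append_S
  obtain ⟨D', rfl⟩ := hF2'.exists_eq_append_S
  simpa [ffConc_ENWS_eq] using h

lemma ffConc_ffAug_inj {F1 F1' F2 F2' : List Letter} {i i' : ℕ} (hF1 : IsFF F1)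
    (hF1' : IsFF F1') (hF2 : IsFF F2) (hF2' : IsFF F2') (hi : i ≤ jaw F1) (hi' : i' ≤ jaw F1')
    (h : ffConc (ffAug F1 i) F2 = ffConc (ffAug F1' i') F2') :
    F1 = F1' ∧ F2 = F2' ∧ i = i' := by
  obtain ⟨j, T, -, rfl⟩ := hF1.exists_eq
  obtain ⟨j', T', -, rfl⟩ := hF1'.exists_eq
  obtain ⟨k, H, -, rfl⟩ := hF2.exists_eq
  obtain ⟨k', H', -, rfl⟩ := hF2'.exists_eq
  rw [jaw_replicate_append_N] at hi hi'
  rw [ffConc_ffAug_eq, ffConc_ffAug_eq] at h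
  obtain ⟨hik, h⟩ := replicate_append_N_inj h
  have hlat := hF2.lat_eq_zero
  have hlat' := hF2'.lat_eq_zero
  obtain rfl : H = H' := by
    rcases List.append_eq_append_iff.1 h with ⟨t, rfl, ht⟩ | ⟨t, rfl, ht⟩
    · obtain rfl := hF1.eq_nil_of_append_middle hF2' ht (by simp; omega) (by simp_all)
      simp
    · obtain rfl := hF1'.eq_nil_of_append_middle hF2 ht (by simp; omega) (by simp_all)
      simp
  obtain ⟨hji, h⟩ := replicate_append_N_inj (List.append_cancel_left h)
  obtain rfl : T = T' := by simpa using h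
  obtain rfl : j = j' := hF1.replicate_inj hF1'
  obtain rfl : i = i' := by omega
  obtain rfl : k = k' := by omega
  exact ⟨rfl, rfl, rfl⟩

lemma IsFF.suffix_ffAug {F1 : List Letter} (hF1 : IsFF F1) (i : ℕ) : [S, S] <:+ ffAug F1 i := by
  obtain ⟨j, T, -, rfl⟩ := hF1.exists_eq
  exact ⟨replicate i E ++ N :: (replicate (j - i) E ++ N :: T), by simp [ffAug_eq]⟩

lemma IsFF.suffix_ffConc_ffAug {F1 : List Letter} (hF1 : IsFF F1) (i : ℕ) (F2 : List Letter) :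
    [S, S] <:+ ffConc (ffAug F1 i) F2 := by
  obtain ⟨j, T, -, rfl⟩ := hF1.exists_eq
  rw [ffAug_eq, ffConc_eq]
  exact ⟨replicate i E ++ F2.dropLast ++ replicate (j - i) E ++ N :: T, by simp⟩

lemma suffix_ffConc_ENWS (F2 : List Letter) : [W, S] <:+ ffConc [E, N, W, S] F2 :=
  ⟨E :: F2.dropLast, by simp [ffConc_ENWS_eq]⟩

/-- Heads are the fish of cases I and II; cases III and IV concatenate a head with a fish. -/
def IsHead (H : List Letter) : Prop :=
  H = [E, N, W, S] ∨ ∃ F1 i, IsFF F1 ∧ 1 ≤ i ∧ i ≤ jaw F1 ∧ H = ffAug F1 i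

def HasDecomposition (F : List Letter) : Prop :=
  IsHead F ∨ ∃ H F2, IsHead H ∧ IsFF F2 ∧ F = ffConc H F2

namespace IsHead

variable {H : List Letter}

lemma exists_eq (hH : IsHead H) : ∃ j R, H = replicate j E ++ N :: R := by
  rcases hH with rfl | ⟨F1, i, hF1, -, -, rfl⟩
  · exact ⟨1, [W, S], rfl⟩
  · obtain ⟨j, T, -, rfl⟩ := hF1.exists_eq
    exact ⟨i, _, ffAug_eq j i _⟩

lemma glue_tail {j : ℕ} {R u v p q : List Letter} (hH : IsHead (replicate j E ++ N :: R))
    (hg : Gluing p q) (hR : R = u ++ p ++ v) : IsHead (replicate j E ++ N :: (u ++ q ++ v)) := by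
  rcases hH with hH | ⟨F1, i, hF1, hi1, hij, hH⟩
  · obtain ⟨rfl, rfl⟩ := replicate_append_N_inj (b := 1) (Y := [W, S]) hH
    cases hg <;> rcases u with _ | ⟨x, _ | ⟨y, u⟩⟩ <;> simp at hR
    obtain rfl := hR
    exact Or.inr ⟨[E, N, W, S], 1, .base, le_rfl, le_rfl, rfl⟩
  · obtain ⟨j1, T, -, rfl⟩ := hF1.exists_eq
    rw [jaw_replicate_append_N] at hij
    rw [ffAug_eq] at hH
    obtain ⟨rfl, rfl⟩ := replicate_append_N_inj hH
    obtain ⟨u', rfl, hu'⟩ := hg.eq_replicate_append hR.symm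
    rcases hg.eq_N_cons hu'.symm with ⟨rfl, rfl, rfl, rfl⟩ | ⟨u'', rfl, hR'⟩
    · refine Or.inr ⟨_, j, hF1.lower_at_jaw, hi1, by rw [jaw_replicate_append_N]; omega, ?_⟩
      rw [ffAug_eq, show j1 + 1 - j = j1 - j + 1 by omega, List.replicate_succ']
      simp
    · obtain ⟨t, hT, rfl⟩ := hg.eq_append_S (X := T ++ [S]) (by simpa using hR'.symm)
      obtain ⟨t', rfl, rfl⟩ := hg.eq_append_S hT.symm
      refine Or.inr ⟨replicate j1 E ++ N :: (u'' ++ q ++ t' ++ [S]), j,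
        by simpa using IsFF.glue (u := replicate j1 E ++ N :: u'') hg (by simpa using hF1), hi1,
        by rw [jaw_replicate_append_N]; omega, ?_⟩
      rw [ffAug_eq]
      simp

lemma hasDecomposition_glue {u v p q : List Letter} (hH : IsHead H) (hg : Gluing p q)
    (h : H = u ++ p ++ v) : HasDecomposition (u ++ q ++ v) := by
  obtain ⟨j, R, rfl⟩ := hH.exists_eq
  obtain ⟨u', rfl, hu'⟩ := hg.eq_replicate_append h.symm
  rcases hg.eq_N_cons hu'.symm with ⟨rfl, rfl, rfl, rfl⟩ | ⟨u'', rfl, hR⟩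
  · exact Or.inr ⟨_, _, hH, .base, by rw [ffConc_eq]; simp⟩
  · exact Or.inl (by simpa using hH.glue_tail hg hR)

lemma exists_of_N_N {j : ℕ} {R : List Letter} (hH : IsHead (replicate j E ++ N :: N :: R)) :
    ∃ T, IsFF (replicate j E ++ N :: T) ∧ R = T ++ [S] := by
  rcases hH with hH | ⟨F1, i, hF1, -, hij, hH⟩
  · simpa using (replicate_append_N_inj (b := 1) (Y := [W, S]) hH).2
  · obtain ⟨j1, T, -, rfl⟩ := hF1.exists_eq
    rw [jaw_replicate_append_N] at hij
    rw [ffAug_eq] at hH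
    obtain ⟨rfl, hR⟩ := replicate_append_N_inj hH
    obtain rfl : j = j1 := by
      rcases h : j1 - j with _ | n
      · omega
      · simp [h, List.replicate_succ] at hR
    exact ⟨T ++ [S], hF1, by simpa using hR⟩

end IsHead

namespace HasDecomposition

variable {F : List Letter}

lemma eq_of_suffix_W_S (hF : HasDecomposition F) (h : [W, S] <:+ F) :
    F = [E, N, W, S] ∨ ∃ B, IsFF B ∧ F = ffConc [E, N, W, S] B := by
  rcases hF with (rfl | ⟨F1, i, hF1, -, -, rfl⟩) |
      ⟨H, B, rfl | ⟨F1, i, hF1, -, -, rfl⟩, hB, rfl⟩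
  · exact Or.inl rfl
  · simpa using suffix_pair_eq h (hF1.suffix_ffAug i)
  · exact Or.inr ⟨B, hB, rfl⟩
  · simpa using suffix_pair_eq h (hF1.suffix_ffConc_ffAug i B)

/-- The double gluing that swaps the last `W` of `F2 = D ++ [W, S]` with the middle `N` of
`✠_j(F1)` in `✠_j(F1) ⊙ F2`, where `j = jaw F1`. -/
lemma double_glue_junction {j : ℕ} {T D : List Letter} (hF1 : IsFF (replicate j E ++ N :: T))
    (hF2 : HasDecomposition (D ++ [W, S])) :
    HasDecomposition (replicate j E ++ D ++ N :: W :: (T ++ [S])) := by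
  have hA : IsHead (replicate (j + 1) E ++ N :: N :: W :: (T ++ [S])) :=
    Or.inr ⟨_, j + 1, hF1.lower_at_jaw, by omega, by rw [jaw_replicate_append_N],
      by rw [ffAug_eq]; simp⟩
  rcases hF2.eq_of_suffix_W_S ⟨D, rfl⟩ with hD | ⟨B, hB, hD⟩
  · obtain rfl : D = [E, N] :=
      List.append_cancel_right (hD.trans (by rfl : _ = [E, N] ++ [W, S]))
    exact Or.inl (by simpa [List.replicate_succ'] using hA)
  · rw [ffConc_ENWS_eq] at hD
    obtain rfl : D = E :: B.dropLast := List.append_cancel_right (by simpa using hD)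
    exact Or.inr ⟨_, B, hA, hB, by rw [ffConc_eq]; simp [List.replicate_succ']⟩

lemma glue_ffConc {H F2 u v p q : List Letter} (hH : IsHead H) (hF2 : IsFF F2)
    (hg : Gluing p q) (h : ffConc H F2 = u ++ p ++ v)
    (IH : ∀ G, IsFF G → G.length < (u ++ q ++ v).length → HasDecomposition G) :
    HasDecomposition (u ++ q ++ v) := by
  obtain ⟨j, R, rfl⟩ := hH.exists_eq
  obtain ⟨D, rfl⟩ := hF2.exists_eq_append_S
  rw [ffConc_eq, List.dropLast_concat] at h
  obtain ⟨u', rfl, hDR⟩ := hg.eq_replicate_append (by simpa using h.symm)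
  rcases hg.eq_append hDR.symm with ⟨t, rfl, rfl⟩ | ⟨t, rfl, rfl⟩ | ⟨rfl, rfl, rfl, rfl⟩
  · refine Or.inr ⟨_, u' ++ q ++ t ++ [S], hH, ?_, by rw [ffConc_eq]; simp⟩
    simpa using IsFF.glue (v := t ++ [S]) hg (by simpa using hF2)
  · exact Or.inr ⟨_, _, hH.glue_tail hg rfl, hF2, by rw [ffConc_eq]; simp⟩
  · obtain ⟨T, hF1, rfl⟩ := hH.exists_of_N_N
    have hF2' := IH _ hF2 (by simp; omega)
    simpa using double_glue_junction hF1 (D := u') (by simpa using hF2')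

lemma glue {u v p q : List Letter} (hP : HasDecomposition (u ++ p ++ v)) (hg : Gluing p q)
    (IH : ∀ G, IsFF G → G.length < (u ++ q ++ v).length → HasDecomposition G) :
    HasDecomposition (u ++ q ++ v) := by
  rcases hP with hH | ⟨H, F2, hH, hF2, h⟩
  · exact hH.hasDecomposition_glue hg rfl
  · exact glue_ffConc hH hF2 hg h.symm IH

end HasDecomposition

lemma IsFF.hasDecomposition_of_forall_lt {F : List Letter} (hF : IsFF F)
    (IH : ∀ G, IsFF G → G.length < F.length → HasDecomposition G) : HasDecomposition F := by
  induction hF using IsFF.gluing_induction with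
  | base => exact Or.inl (Or.inl rfl)
  | glue u v p q hg _ ih =>
    exact (ih fun G hG hlt => IH G hG (hlt.trans_le (by simpa using hg.length_le))).glue hg IH

theorem IsFF.hasDecomposition {F : List Letter} (hF : IsFF F) : HasDecomposition F :=
  hF.hasDecomposition_of_forall_lt fun G hG _ => hG.hasDecomposition
termination_by F.length

lemma ENWS_ne_ffConc_ENWS {F2 : List Letter} (hF2 : IsFF F2) :
    [E, N, W, S] ≠ ffConc [E, N, W, S] F2 := by
  obtain ⟨_ | j, T, hj, rfl⟩ := hF2.exists_eq
  · exact absurd hj (lt_irrefl 0)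
  · simp [ffConc_ENWS_eq, List.dropLast_cons_of_ne_nil, List.replicate_succ]

lemma ffAug_ne_ffConc_ffAug {F1 F1' F2' : List Letter} {i i' : ℕ} (hF1 : IsFF F1)
    (hF1' : IsFF F1') (hF2' : IsFF F2') : ffAug F1 i ≠ ffConc (ffAug F1' i') F2' := by
  obtain ⟨j, T, -, rfl⟩ := hF1.exists_eq
  obtain ⟨j', T', -, rfl⟩ := hF1'.exists_eq
  obtain ⟨k, H, -, rfl⟩ := hF2'.exists_eq
  rw [ffAug_eq, ffConc_ffAug_eq]
  intro h
  obtain ⟨-, h⟩ := replicate_append_N_inj h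
  obtain rfl := hF1.eq_nil_of_append_middle (H := []) (by simpa using hF2') h (by simp; omega)
    (by simpa using hF2'.lat_eq_zero)
  exact hF2'.middle_ne_nil rfl

lemma caseII_ffAug {F1 : List Letter} {i : ℕ} (hF1 : IsFF F1) (hi1 : 1 ≤ i) (hi : i ≤ jaw F1) :
    CaseII (ffAug F1 i) := by
  refine ⟨(F1, i), ⟨hF1, hi1, hi, rfl⟩, ?_⟩
  rintro ⟨G, k⟩ ⟨hG, -, hk, h⟩
  obtain ⟨rfl, rfl⟩ := ffAug_inj hG hF1 hk hi h.symm
  rfl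

lemma caseIII_ffConc {F2 : List Letter} (hF2 : IsFF F2) : CaseIII (ffConc [E, N, W, S] F2) :=
  ⟨F2, ⟨hF2, rfl⟩, fun _ ⟨hG, h⟩ => ffConc_ENWS_inj hG hF2 h.symm⟩

lemma caseIV_ffConc_ffAug {F1 F2 : List Letter} {i : ℕ} (hF1 : IsFF F1) (hF2 : IsFF F2)
    (hi1 : 1 ≤ i) (hi : i ≤ jaw F1) : CaseIV (ffConc (ffAug F1 i) F2) := by
  refine ⟨((F1, F2), i), ⟨hF1, hF2, hi1, hi, rfl⟩, ?_⟩
  rintro ⟨⟨G1, G2⟩, k⟩ ⟨hG1, hG2, -, hk, h⟩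
  obtain ⟨rfl, rfl, rfl⟩ := ffConc_ffAug_inj hG1 hF1 hG2 hF2 hk hi h.symm
  rfl

lemma HasDecomposition.cases {F : List Letter} (hF : HasDecomposition F) :
    CaseI F ∨ CaseII F ∨ CaseIII F ∨ CaseIV F := by
  rcases hF with (rfl | ⟨F1, i, hF1, hi1, hi, rfl⟩) |
      ⟨H, F2, rfl | ⟨F1, i, hF1, hi1, hi, rfl⟩, hF2, rfl⟩
  · exact Or.inl rfl
  · exact Or.inr (Or.inl (caseII_ffAug hF1 hi1 hi))
  · exact Or.inr (Or.inr (Or.inl (caseIII_ffConc hF2)))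
  · exact Or.inr (Or.inr (Or.inr (caseIV_ffConc_ffAug hF1 hF2 hi1 hi)))

lemma not_suffix_S_S_of_suffix_W_S {w : List Letter} (h : [W, S] <:+ w) : ¬ [S, S] <:+ w :=
  fun h' => by simpa using suffix_pair_eq h h'

section Cases

variable {F : List Letter}

lemma CaseI.suffix_W_S (h : CaseI F) : [W, S] <:+ F := h ▸ ⟨[E, N], rfl⟩

lemma CaseII.suffix_S_S (h : CaseII F) : [S, S] <:+ F := by
  obtain ⟨⟨F1, i⟩, ⟨hF1, -, -, rfl⟩, -⟩ := h
  exact hF1.suffix_ffAug i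

lemma CaseIII.suffix_W_S (h : CaseIII F) : [W, S] <:+ F := by
  obtain ⟨F2, ⟨-, rfl⟩, -⟩ := h
  exact suffix_ffConc_ENWS F2

lemma CaseIV.suffix_S_S (h : CaseIV F) : [S, S] <:+ F := by
  obtain ⟨⟨⟨F1, F2⟩, i⟩, ⟨hF1, -, -, -, rfl⟩, -⟩ := h
  exact hF1.suffix_ffConc_ffAug i F2

lemma CaseIII.not_caseI (h : CaseIII F) : ¬ CaseI F := by
  obtain ⟨F2, ⟨hF2, rfl⟩, -⟩ := h
  exact fun h1 => ENWS_ne_ffConc_ENWS hF2 h1.symm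

lemma CaseIV.not_caseII (h : CaseIV F) : ¬ CaseII F := by
  obtain ⟨⟨⟨F1', F2'⟩, i'⟩, ⟨hF1', hF2', -, -, rfl⟩, -⟩ := h
  rintro ⟨⟨F1, i⟩, ⟨hF1, -, -, h⟩, -⟩
  exact ffAug_ne_ffConc_ffAug hF1 hF1' hF2' h.symm

end Cases

/-- Every fighting fish satisfies exactly one of the four cases of the
decomposition, with uniquely determined data in each case. -/
theorem ff_decomposition (F : List Letter) (hF : IsFF F) :
    (CaseI F ∨ CaseII F ∨ CaseIII F ∨ CaseIV F) ∧
    ¬(CaseI F ∧ CaseII F) ∧ ¬(CaseI F ∧ CaseIII F) ∧ ¬(CaseI F ∧ CaseIV F) ∧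
    ¬(CaseII F ∧ CaseIII F) ∧ ¬(CaseII F ∧ CaseIV F) ∧ ¬(CaseIII F ∧ CaseIV F) :=
  ⟨hF.hasDecomposition.cases,
    fun ⟨h1, h2⟩ => not_suffix_S_S_of_suffix_W_S h1.suffix_W_S h2.suffix_S_S,
    fun ⟨h1, h3⟩ => h3.not_caseI h1,
    fun ⟨h1, h4⟩ => not_suffix_S_S_of_suffix_W_S h1.suffix_W_S h4.suffix_S_S,
    fun ⟨h2, h3⟩ => not_suffix_S_S_of_suffix_W_S h3.suffix_W_S h2.suffix_S_S,
    fun ⟨h2, h4⟩ => h4.not_caseII h2,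
    fun ⟨h3, h4⟩ => not_suffix_S_S_of_suffix_W_S h3.suffix_W_S h4.suffix_S_S⟩
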